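/- arXiv:2304.00716 — 7 statements merged into one kernel-verified Lean document; each statement's English description precedes it below -/
import Mathlib

section
/- Let m ≥ 62 be a real number and let Z(x) = x^3 - x^2 - (m-2)x + (m-3). Then Z(√(m-2)) < 0 and Z(x) > 0 for all x ≥ √(m-1.85). Consequently, the largest real root β(m) of Z satisfies √(m-2) < β(m) < √(m-1.85). -/
theorem stmt_0 (m : ℝ) (hm : 62 ≤ m) (Z : ℝ → ℝ)
    (hZ : ∀ x, Z x = x^3 - x^2 - (m-2)*x + (m-3)) :
    Z (Real.sqrt (m-2)) < 0 ∧
    (∀ x, Real.sqrt (m-1.85) ≤ x → 0 < Z x) ∧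
    (∀ β, Z β = 0 → (∀ y, Z y = 0 → y ≤ β) →
      Real.sqrt (m-2) < β ∧ β < Real.sqrt (m-1.85)) := by
  set s := Real.sqrt (m-2) with hs
  set t := Real.sqrt (m-1.85) with ht
  have hm2 : (0:ℝ) ≤ m - 2 := by linarith
  have hm185 : (0:ℝ) ≤ m - 1.85 := by linarith
  have hs2 : s^2 = m - 2 := Real.sq_sqrt hm2
  have ht2 : t^2 = m - 1.85 := Real.sq_sqrt hm185
  have hsnn : 0 ≤ s := Real.sqrt_nonneg _
  have htnn : 0 ≤ t := Real.sqrt_nonneg _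
  have ht7 : (7.7:ℝ) ≤ t := by nlinarith
  have hst : s < t := by nlinarith
  have hZs : Z s < 0 := by rw [hZ]; nlinarith [hs2]
  have hpos : ∀ x, t ≤ x → 0 < Z x := by
    intro x hx
    rw [hZ]
    nlinarith [mul_nonneg (by linarith : (0:ℝ) ≤ x - t)
      (by nlinarith : (0:ℝ) ≤ (x-1)*(x+t) + 0.15), ht2]
  refine ⟨hZs, hpos, ?_⟩
  intro β hβ hmax
  have hβt : β < t := by
    by_contra h
    push_neg at h
    exact absurd hβ (ne_of_gt (hpos β h))
  have hcont : Continuous Z := by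
    have : Z = fun x => x^3 - x^2 - (m-2)*x + (m-3) := funext hZ
    rw [this]; continuity
  have hZt : 0 < Z t := hpos t le_rfl
  have : (0:ℝ) ∈ Set.Icc (Z s) (Z t) := ⟨le_of_lt hZs, le_of_lt hZt⟩
  obtain ⟨c, hc, hZc⟩ := intermediate_value_Icc (le_of_lt hst) hcont.continuousOn this
  have hcβ : c ≤ β := hmax c hZc
  have hsc : s < c := lt_of_le_of_ne hc.1 (by rintro rfl; exact absurd hZc (ne_of_lt hZs))
  exact ⟨lt_of_lt_of_le hsc hcβ, hβt⟩
end

section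
/- Let m ≥ 12 be a real number and L(x) = x^6 - m x^4 + (5m/2 - 7) x^2 + (4 - m) x + (2 - m/2). Then L(√(m-2.5)) < 0. -/
theorem stmt_2 (m : ℝ) (hm : 12 ≤ m) (L : ℝ → ℝ)
    (hL : ∀ x, L x = x^6 - m*x^4 + (5*m/2 - 7)*x^2 + (4-m)*x + (2 - m/2)) :
    L (Real.sqrt (m-2.5)) < 0 := by
  set s := Real.sqrt (m - 2.5) with hs
  have h1 : s ^ 2 = m - 2.5 := Real.sq_sqrt (by linarith)
  have h2 : (0:ℝ) ≤ s := Real.sqrt_nonneg _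
  have h4 : s ^ 4 = (m - 2.5) ^ 2 := by rw [show s^4 = (s^2)^2 by ring, h1]
  have h6 : s ^ 6 = (m - 2.5) ^ 3 := by rw [show s^6 = (s^2)^3 by ring, h1]
  rw [hL]
  nlinarith [mul_nonneg h2 (by linarith : (0:ℝ) ≤ m - 4)]
end

section
/- Let m ≥ 12 be a real number and L(x) = x^6 - m x^4 + (5m/2 - 7) x^2 + (4 - m) x + (2 - m/2). Then L(x) > 0 for every x ≥ √(m-2). Consequently, the largest real root of L lies strictly between √(m-2.5) and √(m-2). -/
theorem stmt_4 (m : ℝ) (hm : 12 ≤ m) (L : ℝ → ℝ)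
    (hL : ∀ x, L x = x^6 - m*x^4 + (5*m/2 - 7)*x^2 + (4-m)*x + (2 - m/2)) :
    (∀ x, Real.sqrt (m-2) ≤ x → 0 < L x) ∧
    (∀ β, L β = 0 → (∀ y, L y = 0 → y ≤ β) →
      Real.sqrt (m-2.5) < β ∧ β < Real.sqrt (m-2)) := by
  have hm2 : (0:ℝ) ≤ m - 2 := by linarith
  have hb2 : Real.sqrt (m-2) ^ 2 = m - 2 := Real.sq_sqrt hm2
  have hb3 : (3:ℝ) ≤ Real.sqrt (m-2) := by
    rw [show (3:ℝ) = Real.sqrt 9 by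
      rw [show (9:ℝ) = 3^2 by norm_num, Real.sqrt_sq (by norm_num)]]
    exact Real.sqrt_le_sqrt (by linarith)
  have key : ∀ x, Real.sqrt (m-2) ≤ x → 0 < L x := by
    intro x hx
    have hx3 : 3 ≤ x := le_trans hb3 hx
    have hx2 : m - 2 ≤ x^2 := by
      rw [← hb2]
      exact pow_le_pow_left₀ (Real.sqrt_nonneg _) hx 2
    rw [hL]
    nlinarith [sq_nonneg (x^2 - (m-2)),
      mul_nonneg (sub_nonneg.2 hx2) (sq_nonneg x), sq_nonneg (x-3),
      mul_nonneg (mul_nonneg (sub_nonneg.2 hx2) (sub_nonneg.2 hx2)) (sq_nonneg x),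
      mul_nonneg (sub_nonneg.2 hx2) (mul_nonneg (sub_nonneg.2 hx3)
        (by linarith : (0:ℝ) ≤ x)),
      sq_nonneg (x^3 - m*x/2),
      mul_pos (by linarith : (0:ℝ) < x) (by linarith : (0:ℝ) < x)]
  refine ⟨key, ?_⟩
  intro β hβ hmax
  have hub : β < Real.sqrt (m-2) := by
    by_contra h
    push_neg at h
    have := key β h
    linarith [hβ ▸ this]
  have hm25 : (0:ℝ) ≤ m - 2.5 := by linarith
  have ha2 : Real.sqrt (m-2.5) ^ 2 = m - 2.5 := Real.sq_sqrt hm25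
  have ha0 : (0:ℝ) ≤ Real.sqrt (m-2.5) := Real.sqrt_nonneg _
  have ha3 : (3:ℝ) ≤ Real.sqrt (m-2.5) := by
    rw [show (3:ℝ) = Real.sqrt 9 by
      rw [show (9:ℝ) = 3^2 by norm_num, Real.sqrt_sq (by norm_num)]]
    exact Real.sqrt_le_sqrt (by linarith)
  have hLa : L (Real.sqrt (m-2.5)) < 0 := by
    rw [hL]
    set a := Real.sqrt (m-2.5) with ha
    have h4 : a^4 = (m-2.5)^2 := by
      rw [show a^4 = (a^2)^2 by ring, ha2]
    have h6 : a^6 = (m-2.5)^3 := by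
      rw [show a^6 = (a^2)^3 by ring, ha2]
    have : (4-m)*a ≤ (4-m)*3 := by
      apply mul_le_mul_of_nonpos_left ha3 (by linarith)
    nlinarith [ha2, h4, h6]
  have hab : Real.sqrt (m-2.5) < Real.sqrt (m-2) :=
    Real.sqrt_lt_sqrt hm25 (by norm_num)
  have hLb : 0 < L (Real.sqrt (m-2)) := key _ le_rfl
  have hcont : Continuous L := by
    have : L = fun x => x^6 - m*x^4 + (5*m/2 - 7)*x^2 + (4-m)*x + (2 - m/2) :=
      funext hL
    rw [this]; continuity
  have hmem : (0:ℝ) ∈ Set.Ioo (L (Real.sqrt (m-2.5))) (L (Real.sqrt (m-2))) :=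
    ⟨hLa, hLb⟩
  obtain ⟨c, hc, hLc⟩ :=
    intermediate_value_Ioo hab.le hcont.continuousOn hmem
  exact ⟨lt_of_lt_of_le hc.1 (hmax c hLc), hub⟩
end

section
/- Let m ≥ 10 be a real number. Define L(x) = x^6 - m x^4 + (5m/2-7)x^2 + (4-m)x + (2 - m/2) and T(x) = x^5 - m x^3 + ((7m-22)/3) x + (16-4m)/3. Then for every real x ≥ 3, L(x) - x·T(x) = ((m+2)/6) x^2 + ((m-4)/3) x + (4-m)/2, and this quantity is strictly positive. Consequently the largest real root of L is strictly smaller than the largest real root of T (assuming both largest roots are at least 3). -/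
set_option maxHeartbeats 1000000


theorem stmt_5 (m : ℝ) (hm : 10 ≤ m) (L T : ℝ → ℝ)
    (hL : ∀ x, L x = x^6 - m*x^4 + (5*m/2 - 7)*x^2 + (4-m)*x + (2 - m/2))
    (hT : ∀ x, T x = x^5 - m*x^3 + ((7*m-22)/3)*x + (16-4*m)/3) :
    (∀ x : ℝ, 3 ≤ x →
      L x - x * T x = ((m+2)/6)*x^2 + ((m-4)/3)*x + (4-m)/2 ∧
      0 < ((m+2)/6)*x^2 + ((m-4)/3)*x + (4-m)/2) ∧
    (∀ βL βT, L βL = 0 → (∀ y, L y = 0 → y ≤ βL) →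
      T βT = 0 → (∀ y, T y = 0 → y ≤ βT) →
      3 ≤ βL → 3 ≤ βT → βL < βT) := by
  have key : ∀ x : ℝ, 3 ≤ x →
      L x - x * T x = ((m+2)/6)*x^2 + ((m-4)/3)*x + (4-m)/2 ∧
      0 < ((m+2)/6)*x^2 + ((m-4)/3)*x + (4-m)/2 := by
    intro x hx
    constructor
    · rw [hL, hT]; ring
    · nlinarith [sq_nonneg (x - 3), sq_nonneg x]
  refine ⟨key, ?_⟩
  intro βL βT hLβ _ hTβ hTmax h3L h3T
  by_contra hlt
  push_neg at hlt
  have hq := key βL h3L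
  have hprod : βL * T βL < 0 := by
    have h1 := hq.1
    have h2 := hq.2
    rw [hLβ] at h1
    linarith
  have hTneg : T βL < 0 := by
    by_contra h
    push_neg at h
    nlinarith
  have hTcont : Continuous T := by
    have hfe : T = fun x => x^5 - m*x^3 + ((7*m-22)/3)*x + (16-4*m)/3 := funext hT
    rw [hfe]; continuity
  obtain ⟨X, hXdef⟩ : ∃ X : ℝ, X = m + βL + 1 := ⟨_, rfl⟩
  have hXgt : βL < X := by rw [hXdef]; linarith
  have h14 : (14:ℝ) ≤ X := by rw [hXdef]; linarith
  have hmX : m ≤ X - 4 := by rw [hXdef]; linarith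
  have hTX : 0 < T X := by
    rw [hT]
    have hX0 : (0:ℝ) ≤ X := by linarith
    have h1 : m * X^3 ≤ (X - 4) * X^3 :=
      mul_le_mul_of_nonneg_right hmX (pow_nonneg hX0 3)
    have h2 : 0 ≤ X^4 * (X - 1) := mul_nonneg (pow_nonneg hX0 4) (by linarith)
    have h3 : 0 ≤ X * (X^2 - 1) := mul_nonneg hX0 (by nlinarith [h14])
    have h4 : 0 ≤ ((7*m-22)/3) * X := mul_nonneg (by linarith) hX0
    nlinarith [h1, h2, h3, h4]
  obtain ⟨c, hc, hTc⟩ : ∃ c ∈ Set.Icc βL X, T c = 0 := by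
    have hsub := intermediate_value_Icc hXgt.le hTcont.continuousOn
    have h0 : (0:ℝ) ∈ Set.Icc (T βL) (T X) := ⟨hTneg.le, hTX.le⟩
    exact hsub h0
  have hcle : c ≤ βT := hTmax c hTc
  have hceq : c = βL := le_antisymm (by linarith) hc.1
  rw [hceq] at hTc
  linarith
end

section
/- Let m ≥ 38 be a real number, L(x) = x^6 - m x^4 + (5m/2-7)x^2 + (4-m)x + (2-m/2), and Y(x) = x^4 - x^3 + (2-m)x^2 + (m-3)x + (m-3)/3. Then L(x) > x^2·Y(x) for every x ≥ √(m-3). Consequently, if the largest real root of L and the largest real root of Y both exceed √(m-3), then the largest root of L is strictly smaller than that of Y. -/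
theorem stmt_7 (m : ℝ) (hm : 38 ≤ m) (L Y : ℝ → ℝ)
    (hL : ∀ x, L x = x^6 - m*x^4 + (5*m/2 - 7)*x^2 + (4-m)*x + (2 - m/2))
    (hY : ∀ x, Y x = x^4 - x^3 + (2-m)*x^2 + (m-3)*x + (m-3)/3) :
    (∀ x, Real.sqrt (m-3) ≤ x → x^2 * Y x < L x) ∧
    (∀ βL βY, L βL = 0 → (∀ y, L y = 0 → y ≤ βL) →
      Y βY = 0 → (∀ y, Y y = 0 → y ≤ βY) →
      Real.sqrt (m-3) < βL → Real.sqrt (m-3) < βY → βL < βY) := by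
  set s := Real.sqrt (m-3) with hs
  have hm3 : (0:ℝ) ≤ m - 3 := by linarith
  have hs0 : 0 ≤ s := Real.sqrt_nonneg _
  have hs2 : s^2 = m - 3 := Real.sq_sqrt hm3
  clear_value s
  have h5 : 5 ≤ s := by nlinarith [hs2, hs0]
  have key : ∀ x, s ≤ x → x^2 * Y x < L x := by
    intro x hx
    set t := x - s with htdef
    clear_value t
    have ht : 0 ≤ t := by rw [htdef]; linarith
    have c0pos : 0 < m^2/6 - m + 2 - (m-4)*s := by
      nlinarith [hs2, hs0, sq_nonneg (m-38), sq_nonneg ((m-4)*s), mul_nonneg (mul_nonneg hs0 hs0) hs0]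
    have c1pos : 0 < 2*(m-3)^2 + 4 - m + s*(12 - 11*m/3) := by
      nlinarith [hs2, mul_nonneg (sub_nonneg.2 h5) hs0, sq_nonneg (m-38)]
    have c2pos : 0 < 7*(m-3)*s - 12*(m-3) + 13*m/6 - 6 := by
      nlinarith [hs2, h5, mul_nonneg (sub_nonneg.2 h5) hs0]
    have c3pos : 0 < 9*(m-3) - 8*s := by nlinarith [hs2, h5]
    have c4pos : 0 < 5*s - 2 := by linarith
    have heq : L x - x^2 * Y x =
        (m^2/6 - m + 2 - (m-4)*s) + (2*(m-3)^2 + 4 - m + s*(12 - 11*m/3))*t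
        + (7*(m-3)*s - 12*(m-3) + 13*m/6 - 6)*t^2 + (9*(m-3) - 8*s)*t^3
        + (5*s - 2)*t^4 + t^5 := by
      rw [hL x, hY x]
      have hxst : x = s + t := by rw [htdef]; ring
      rw [hxst]
      linear_combination ((-6)*t + (-12)*t^2 + 10*t^3 + (-8)*s*t + 10*s*t^2
        + (-2)*s^2 + 5*s^2*t + s^3 + m/6 + 2*m*t) * hs2
    have h1 : 0 ≤ (2*(m-3)^2 + 4 - m + s*(12 - 11*m/3))*t := mul_nonneg c1pos.le ht
    have h2 : 0 ≤ (7*(m-3)*s - 12*(m-3) + 13*m/6 - 6)*t^2 :=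
      mul_nonneg c2pos.le (pow_nonneg ht 2)
    have h3 : 0 ≤ (9*(m-3) - 8*s)*t^3 := mul_nonneg c3pos.le (pow_nonneg ht 3)
    have h4 : 0 ≤ (5*s - 2)*t^4 := mul_nonneg c4pos.le (pow_nonneg ht 4)
    have h5' : 0 ≤ t^5 := pow_nonneg ht 5
    linarith [heq, h1, h2, h3, h4, h5', c0pos]
  refine ⟨key, ?_⟩
  intro βL βY hLβ hLmax hYβ hYmax hβL hβY
  by_contra hcon
  push_neg at hcon
  -- βY ≤ βL
  have hβLpos : 0 < βL := lt_of_le_of_lt hs0 hβL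
  have hYβL : Y βL < 0 := by
    have h1 := key βL hβL.le
    rw [hLβ] at h1
    nlinarith [sq_nonneg βL, pow_pos hβLpos 2]
  set B := m + βL + 1 with hB
  clear_value B
  have hBβL : βL ≤ B := by rw [hB]; linarith
  have hYB : 0 < Y B := by
    have hBm : m ≤ B := by rw [hB]; linarith
    have hB38 : (38:ℝ) ≤ B := le_trans hm hBm
    have hBpos : (0:ℝ) < B := by linarith
    have t1 : 0 < B^3 * (B - 2) := mul_pos (pow_pos hBpos 3) (by linarith)
    have t2 : 0 ≤ B^2 * (B - m) := mul_nonneg (sq_nonneg B) (by linarith)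
    have t3 : 0 ≤ (m-3) * B := mul_nonneg hm3 hBpos.le
    rw [hY B]
    nlinarith [t1, t2, t3, sq_nonneg B]
  have hYc : Continuous Y := by
    have : Y = fun x => x^4 - x^3 + (2-m)*x^2 + (m-3)*x + (m-3)/3 := funext hY
    rw [this]; fun_prop
  have hiv : (0:ℝ) ∈ Set.Icc (Y βL) (Y B) := ⟨hYβL.le, hYB.le⟩
  obtain ⟨y, hy, hy0⟩ := intermediate_value_Icc hBβL hYc.continuousOn hiv
  have hyY := hYmax y hy0
  have : y = βL := le_antisymm (le_trans hyY hcon) hy.1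
  rw [this] at hy0
  linarith [hYβL, hy0.le, hy0.ge]
end

section
/- Let G be a triangle-free simple graph with m edges. Then the spectral radius of the adjacency matrix of G satisfies λ(G) ≤ √m. -/
/-!
If `A x = μ x`, then `A² x = μ² x`; reading this at a vertex `u` where `|x|` is maximal gives
`μ² |x u| ≤ (∑_{v ~ u} deg v) |x u|`. In a triangle-free graph the neighbours of `u` are pairwise
non-adjacent, so their stars are disjoint sets of edges and `∑_{v ~ u} deg v ≤ m`.
-/

open Finset Matrix

namespace SimpleGraph

variable {V : Type*} [Fintype V] (G : SimpleGraph V) [DecidableRel G.Adj]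

theorem sum_degree_neighborFinset_le_card_edgeFinset [DecidableEq V] (hG : G.CliqueFree 3)
    (u : V) :
    ∑ v ∈ G.neighborFinset u, G.degree v ≤ #G.edgeFinset := by
  have hdisj : (G.neighborFinset u : Set V).PairwiseDisjoint (G.incidenceFinset ·) := by
    intro v hv w hw hvw
    rw [Function.onFun, ← disjoint_coe, coe_incidenceFinset, coe_incidenceFinset,
      Set.disjoint_iff_inter_eq_empty]
    refine G.incidenceSet_inter_incidenceSet_of_not_adj (fun hadj => ?_) hvw
    simp only [coe_neighborFinset, mem_neighborSet] at hv hw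
    exact hG {u, v, w} (is3Clique_triple_iff.mpr ⟨hv, hw, hadj⟩)
  simp_rw [← card_incidenceFinset_eq_degree]
  rw [← card_biUnion hdisj]
  exact card_le_card (biUnion_subset.mpr fun v _ => G.incidenceFinset_subset v)

variable {α : Type*} [Field α] [LinearOrder α] [IsStrictOrderedRing α]

theorem abs_adjMatrix_mulVec_apply_le {x : V → α} {c : α} (hx : ∀ w, |x w| ≤ c) (v : V) :
    |(G.adjMatrix α *ᵥ x) v| ≤ G.degree v * c :=
  calc |(G.adjMatrix α *ᵥ x) v| = |∑ w ∈ G.neighborFinset v, x w| := by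
        rw [adjMatrix_mulVec_apply]
    _ ≤ ∑ w ∈ G.neighborFinset v, |x w| := abs_sum_le_sum_abs _ _
    _ ≤ ∑ _w ∈ G.neighborFinset v, c := sum_le_sum fun w _ => hx w
    _ = G.degree v * c := by rw [sum_const, card_neighborFinset_eq_degree, nsmul_eq_mul]

theorem sq_le_of_adjMatrix_mulVec_eq_smul {M : α}
    (hM : ∀ u, (∑ v ∈ G.neighborFinset u, G.degree v : α) ≤ M)
    {μ : α} {x : V → α} (hx : x ≠ 0) (hev : G.adjMatrix α *ᵥ x = μ • x) : μ ^ 2 ≤ M := by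
  obtain ⟨w, hw⟩ := Function.ne_iff.mp hx
  obtain ⟨u, -, hu⟩ := exists_max_image univ (fun v => |x v|) ⟨w, mem_univ w⟩
  have hxu : 0 < |x u| := (abs_pos.mpr hw).trans_le (hu w (mem_univ w))
  have hsq : G.adjMatrix α *ᵥ (G.adjMatrix α *ᵥ x) = μ ^ 2 • x := by
    rw [hev, mulVec_smul, hev, smul_smul, sq]
  refine le_of_mul_le_mul_right ?_ hxu
  calc μ ^ 2 * |x u| = |(G.adjMatrix α *ᵥ (G.adjMatrix α *ᵥ x)) u| := by
        rw [hsq, Pi.smul_apply, smul_eq_mul, abs_mul, abs_of_nonneg (sq_nonneg μ)]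
    _ = |∑ v ∈ G.neighborFinset u, (G.adjMatrix α *ᵥ x) v| := by rw [adjMatrix_mulVec_apply]
    _ ≤ ∑ v ∈ G.neighborFinset u, |(G.adjMatrix α *ᵥ x) v| := abs_sum_le_sum_abs _ _
    _ ≤ ∑ v ∈ G.neighborFinset u, G.degree v * |x u| :=
        sum_le_sum fun v _ => G.abs_adjMatrix_mulVec_apply_le (fun w => hu w (mem_univ w)) v
    _ ≤ M * |x u| := by rw [← sum_mul]; exact mul_le_mul_of_nonneg_right (hM u) hxu.le

end SimpleGraph

theorem stmt_13 {V : Type*} [Fintype V] [DecidableEq V]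
    (G : SimpleGraph V) [DecidableRel G.Adj]
    (hG : G.CliqueFree 3)
    (hA : (G.adjMatrix ℝ).IsHermitian)
    (m : ℕ) (hm : m = G.edgeFinset.card) :
    ∀ i, hA.eigenvalues i ≤ Real.sqrt m := by
  intro i
  have hne : ⇑(hA.eigenvectorBasis i) ≠ 0 := by
    simpa using hA.eigenvectorBasis.orthonormal.ne_zero i
  have hsq : hA.eigenvalues i ^ 2 ≤ m :=
    G.sq_le_of_adjMatrix_mulVec_eq_smul
      (fun u => hm ▸ mod_cast G.sum_degree_neighborFinset_le_card_edgeFinset hG u)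
      hne (hA.mulVec_eigenvectorBasis i)
  exact (le_abs_self _).trans (Real.abs_le_sqrt hsq)
end

section
/- Let H be an n×n Hermitian matrix written in block form H = [[A, B], [B*, C]] where A is an m×m principal submatrix (m ≤ n). Then for every 1 ≤ i ≤ m, λ_{n-m+i}(H) ≤ λ_i(A) ≤ λ_i(H), where λ_j denotes the j-th largest eigenvalue. -/
/-!
Fix `i`. The eigenvectors of `A` for its `i + 1` largest eigenvalues, padded by zeros to vectors
of `ℂⁿ`, and the eigenvectors of `H` for its `n - i` smallest eigenvalues span subspaces of
dimensions adding up to `n + 1`, so they share a nonzero vector `x`. As `A = Vᴴ H V` for the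
isometric coordinate inclusion `V`, both matrices have the same Rayleigh quotient at `x`, whence
`λᵢ(A) ≤ ⟪x, A x⟫ / ‖x‖² = ⟪V x, H (V x)⟫ / ‖V x‖² ≤ λᵢ(H)`. The lower bound is the same argument
with the roles of large and small eigenvalues exchanged. Only `Vᴴ V = 1` matters, so the same
holds for the compression of `H` along any isometry.
-/

open Module Matrix

namespace OrthonormalBasis

variable {𝕜 E ι : Type*} [RCLike 𝕜] [NormedAddCommGroup E] [InnerProductSpace 𝕜 E] [Fintype ι]
  (b : OrthonormalBasis ι 𝕜 E) {T : E →ₗ[𝕜] E} {μ : ι → ℝ}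

theorem repr_map_of_apply_eq_smul [DecidableEq ι] (hb : ∀ j, T (b j) = (μ j : 𝕜) • b j)
    (x : E) (j : ι) : b.repr (T x) j = μ j * b.repr x j := by
  conv_lhs => rw [← b.sum_repr x]
  simp [hb, Pi.single_apply, RCLike.real_smul_eq_coe_mul, mul_comm]

theorem re_inner_map_self_eq_sum (hb : ∀ j, T (b j) = (μ j : 𝕜) • b j) (x : E) :
    RCLike.re (inner 𝕜 x (T x)) = ∑ j, μ j * ‖b.repr x j‖ ^ 2 := by
  classical
  rw [← b.repr.inner_map_map, PiLp.inner_apply, map_sum]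
  refine Finset.sum_congr rfl fun j _ => ?_
  rw [b.repr_map_of_apply_eq_smul hb, RCLike.inner_apply, mul_assoc, RCLike.mul_conj]
  norm_cast

theorem repr_eq_zero_of_mem_span {s : Set ι} {x : E} (hx : x ∈ Submodule.span 𝕜 (b '' s))
    {j : ι} (hj : j ∉ s) : b.repr x j = 0 := by
  rw [b.repr_apply_apply]
  induction hx using Submodule.span_induction with
  | mem y hy =>
    obtain ⟨i, hi, rfl⟩ := hy
    exact b.orthonormal.inner_eq_zero (ne_of_mem_of_not_mem hi hj).symm
  | zero => simp
  | add y z _ _ hy hz => simp [inner_add_right, hy, hz]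
  | smul c y _ hy => simp [inner_smul_right, hy]

theorem mul_norm_sq_le_re_inner_map_self (hb : ∀ j, T (b j) = (μ j : 𝕜) • b j) {s : Set ι}
    {c : ℝ} (hc : ∀ j ∈ s, c ≤ μ j) {x : E} (hx : x ∈ Submodule.span 𝕜 (b '' s)) :
    c * ‖x‖ ^ 2 ≤ RCLike.re (inner 𝕜 x (T x)) := by
  rw [b.re_inner_map_self_eq_sum hb, ← b.repr.norm_map, EuclideanSpace.norm_sq_eq,
    Finset.mul_sum]
  refine Finset.sum_le_sum fun j _ => ?_
  by_cases hj : j ∈ s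
  · exact mul_le_mul_of_nonneg_right (hc j hj) (sq_nonneg _)
  · simp [b.repr_eq_zero_of_mem_span hx hj]

theorem re_inner_map_self_le_mul_norm_sq (hb : ∀ j, T (b j) = (μ j : 𝕜) • b j) {s : Set ι}
    {c : ℝ} (hc : ∀ j ∈ s, μ j ≤ c) {x : E} (hx : x ∈ Submodule.span 𝕜 (b '' s)) :
    RCLike.re (inner 𝕜 x (T x)) ≤ c * ‖x‖ ^ 2 := by
  rw [b.re_inner_map_self_eq_sum hb, ← b.repr.norm_map, EuclideanSpace.norm_sq_eq,
    Finset.mul_sum]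
  refine Finset.sum_le_sum fun j _ => ?_
  by_cases hj : j ∈ s
  · exact mul_le_mul_of_nonneg_right (hc j hj) (sq_nonneg _)
  · simp [b.repr_eq_zero_of_mem_span hx hj]

end OrthonormalBasis

theorem LinearIndependent.finrank_span_image_finset {ι K V : Type*} [DivisionRing K]
    [AddCommGroup V] [Module K V] {v : ι → V} (hv : LinearIndependent K v) (s : Finset ι) :
    finrank K (Submodule.span K (v '' s)) = s.card := by
  rw [Set.image_eq_range]
  exact (finrank_span_eq_card (hv.comp _ Subtype.val_injective)).trans (by simp)

theorem Submodule.exists_ne_zero_mem_of_finrank_lt_add {K V : Type*} [DivisionRing K]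
    [AddCommGroup V] [Module K V] [FiniteDimensional K V] {S T : Submodule K V}
    (h : finrank K V < finrank K S + finrank K T) : ∃ x ≠ 0, x ∈ S ∧ x ∈ T := by
  have hST : ¬Disjoint S T := fun hST => h.not_ge (finrank_add_finrank_le_of_disjoint hST)
  simp only [disjoint_def, not_forall] at hST
  obtain ⟨x, hxS, hxT, hx⟩ := hST
  exact ⟨x, hx, hxS, hxT⟩

namespace LinearIsometry

variable {𝕜 E F ι κ : Type*} [RCLike 𝕜] [NormedAddCommGroup E] [InnerProductSpace 𝕜 E]
  [FiniteDimensional 𝕜 E] [NormedAddCommGroup F] [InnerProductSpace 𝕜 F] [Fintype ι] [Fintype κ]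
  (v : F →ₗᵢ[𝕜] E) (bF : OrthonormalBasis ι 𝕜 F) (bE : OrthonormalBasis κ 𝕜 E)
  {s : Finset ι} {t : Finset κ}

theorem exists_ne_zero_mem_span_image_map_mem_span_image (h : finrank 𝕜 E < s.card + t.card) :
    ∃ y ≠ 0, y ∈ Submodule.span 𝕜 (bF '' s) ∧ v y ∈ Submodule.span 𝕜 (bE '' t) := by
  set S := (Submodule.span 𝕜 (bF '' s)).map v.toLinearMap
  set T := Submodule.span 𝕜 (bE '' t)
  have hS : finrank 𝕜 S = s.card :=
    (Submodule.equivMapOfInjective _ v.injective _).finrank_eq.symm.trans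
      (bF.orthonormal.linearIndependent.finrank_span_image_finset s)
  have hT : finrank 𝕜 T = t.card := bE.orthonormal.linearIndependent.finrank_span_image_finset t
  obtain ⟨_, hx, ⟨y, hy, rfl⟩, hvy⟩ :=
    Submodule.exists_ne_zero_mem_of_finrank_lt_add (S := S) (T := T) (by rwa [hS, hT])
  exact ⟨y, fun h0 => hx (by simp [h0]), hy, hvy⟩

variable {T : E →ₗ[𝕜] E} {S : F →ₗ[𝕜] F} {μ : κ → ℝ} {ν : ι → ℝ}

theorem le_of_compression_ge_of_le (hTS : ∀ y, inner 𝕜 (v y) (T (v y)) = inner 𝕜 y (S y))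
    (hbE : ∀ k, T (bE k) = (μ k : 𝕜) • bE k) (hbF : ∀ j, S (bF j) = (ν j : 𝕜) • bF j)
    (h : finrank 𝕜 E < s.card + t.card) {a c : ℝ} (hs : ∀ j ∈ s, a ≤ ν j)
    (ht : ∀ k ∈ t, μ k ≤ c) : a ≤ c := by
  obtain ⟨y, hy0, hy, hvy⟩ := v.exists_ne_zero_mem_span_image_map_mem_span_image bF bE h
  have hlow := bF.mul_norm_sq_le_re_inner_map_self hbF hs hy
  have hup := bE.re_inner_map_self_le_mul_norm_sq hbE ht hvy
  rw [hTS, v.norm_map] at hup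
  exact le_of_mul_le_mul_right (hlow.trans hup) (by positivity)

theorem le_of_ge_of_compression_le (hTS : ∀ y, inner 𝕜 (v y) (T (v y)) = inner 𝕜 y (S y))
    (hbE : ∀ k, T (bE k) = (μ k : 𝕜) • bE k) (hbF : ∀ j, S (bF j) = (ν j : 𝕜) • bF j)
    (h : finrank 𝕜 E < s.card + t.card) {a c : ℝ} (ht : ∀ k ∈ t, a ≤ μ k)
    (hs : ∀ j ∈ s, ν j ≤ c) : a ≤ c := by
  obtain ⟨y, hy0, hy, hvy⟩ := v.exists_ne_zero_mem_span_image_map_mem_span_image bF bE h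
  have hlow := bE.mul_norm_sq_le_re_inner_map_self hbE ht hvy
  have hup := bF.re_inner_map_self_le_mul_norm_sq hbF hs hy
  rw [hTS, v.norm_map] at hlow
  exact le_of_mul_le_mul_right (hlow.trans hup) (by positivity)

end LinearIsometry

namespace Matrix

theorem conjTranspose_mul_mul_submatrix_one {α ι κ : Type*} [Semiring α] [StarRing α]
    [Fintype κ] [DecidableEq κ] (M : Matrix κ κ α) (f : ι → κ) :
    ((1 : Matrix κ κ α).submatrix id f)ᴴ * M * (1 : Matrix κ κ α).submatrix id f =
      M.submatrix f f := by
  ext i j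
  simp [mul_apply, one_apply]

theorem conjTranspose_mul_submatrix_one {α ι κ : Type*} [Semiring α] [StarRing α]
    [DecidableEq ι] [Fintype κ] [DecidableEq κ] {f : ι → κ} (hf : Function.Injective f) :
    ((1 : Matrix κ κ α).submatrix id f)ᴴ * (1 : Matrix κ κ α).submatrix id f = 1 := by
  simpa [submatrix_one f hf] using conjTranspose_mul_mul_submatrix_one (1 : Matrix κ κ α) f

variable {𝕜 ι κ : Type*} [RCLike 𝕜] [Fintype ι] [DecidableEq ι] [Fintype κ] [DecidableEq κ]

theorem inner_toEuclideanLin_conjTranspose_mul_mul (V : Matrix κ ι 𝕜) (M : Matrix κ κ 𝕜)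
    (y z : EuclideanSpace 𝕜 ι) :
    inner 𝕜 y (toEuclideanLin (Vᴴ * M * V) z) =
      inner 𝕜 (toEuclideanLin V y) (toEuclideanLin M (toEuclideanLin V z)) := by
  simp only [EuclideanSpace.inner_eq_star_dotProduct, ofLp_toLpLin, toLin'_apply, star_mulVec]
  rw [dotProduct_comm (M *ᵥ _), ← dotProduct_mulVec, mulVec_mulVec, mulVec_mulVec,
    dotProduct_comm, Matrix.mul_assoc]

noncomputable def toEuclideanLinearIsometry (V : Matrix κ ι 𝕜) (hV : Vᴴ * V = 1) :
    EuclideanSpace 𝕜 ι →ₗᵢ[𝕜] EuclideanSpace 𝕜 κ :=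
  (toEuclideanLin V).isometryOfInner fun y z => by
    simpa [hV] using (inner_toEuclideanLin_conjTranspose_mul_mul V 1 y z).symm

theorem IsHermitian.toEuclideanLin_eigenvectorBasis_reindex {M : Matrix ι ι 𝕜}
    (hM : M.IsHermitian) {ι' : Type*} [Fintype ι'] (e : ι' ≃ ι) {μ : ι' → ℝ}
    (hμ : ∀ k, μ k = hM.eigenvalues (e k)) (k : ι') :
    toEuclideanLin M (hM.eigenvectorBasis.reindex e.symm k) =
      (μ k : 𝕜) • hM.eigenvectorBasis.reindex e.symm k := by
  ext j
  simpa [hμ, RCLike.real_smul_eq_coe_mul] using congrFun (hM.mulVec_eigenvectorBasis (e k)) j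

end Matrix

theorem stmt_16 {m n : ℕ} (hmn : m ≤ n)
    (H : Matrix (Fin n) (Fin n) ℂ) (hH : H.IsHermitian)
    (A : Matrix (Fin m) (Fin m) ℂ)
    (hAdef : A = H.submatrix (Fin.castLE hmn) (Fin.castLE hmn))
    (hA : A.IsHermitian)
    (μ : Fin n → ℝ) (eμ : Fin n ≃ Fin n)
    (hμ : ∀ i, μ i = hH.eigenvalues (eμ i)) (hμa : Antitone μ)
    (ν : Fin m → ℝ) (eν : Fin m ≃ Fin m)
    (hν : ∀ i, ν i = hA.eigenvalues (eν i)) (hνa : Antitone ν) :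
    ∀ i : Fin m,
      μ ⟨n - m + i.val, by have := i.isLt; omega⟩ ≤ ν i ∧
      ν i ≤ μ ⟨i.val, by have := i.isLt; omega⟩ := by
  intro i
  set V := (1 : Matrix (Fin n) (Fin n) ℂ).submatrix id (Fin.castLE hmn)
  set v := toEuclideanLinearIsometry V (conjTranspose_mul_submatrix_one (Fin.castLE_injective hmn))
  have hHA : ∀ y, inner ℂ (v y) (toEuclideanLin H (v y)) = inner ℂ y (toEuclideanLin A y) := by
    intro y
    rw [hAdef, ← conjTranspose_mul_mul_submatrix_one, inner_toEuclideanLin_conjTranspose_mul_mul]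
    rfl
  have hbH := hH.toEuclideanLin_eigenvectorBasis_reindex eμ hμ
  have hbA := hA.toEuclideanLin_eigenvectorBasis_reindex eν hν
  have hn : finrank ℂ (EuclideanSpace ℂ (Fin n)) = n := finrank_euclideanSpace_fin
  constructor
  · refine v.le_of_ge_of_compression_le _ _ hHA hbH hbA (s := Finset.Ici i)
      (t := Finset.Iic ⟨n - m + i, by omega⟩) ?_ (fun k hk => hμa (Finset.mem_Iic.1 hk))
      (fun j hj => hνa (Finset.mem_Ici.1 hj))
    simp only [hn, Fin.card_Ici, Fin.card_Iic]
    omega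
  · refine v.le_of_compression_ge_of_le _ _ hHA hbH hbA (s := Finset.Iic i)
      (t := Finset.Ici ⟨i, by omega⟩) ?_ (fun j hj => hνa (Finset.mem_Iic.1 hj))
      (fun k hk => hμa (Finset.mem_Ici.1 hk))
    simp only [hn, Fin.card_Ici, Fin.card_Iic]
    omega
end
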